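/- arXiv:0912.0679 — 2 statements merged into one kernel-verified Lean document; each statement's English description precedes it below -/
import Mathlib

section
/- Let k be a field of characteristic different from 2 and let φ be a happy normalized 3-cocycle on C₂×C₂ with coefficients in k*. Set a = φ(τ,σ,σ), b = φ(σ,τ,σ), ε_x = φ(x,x,x) for x ∈ {σ,τ,ρ}, and p = ε_σ·ε_τ·ε_ρ. Then φ is completely determined by ε_σ, ε_τ, ε_ρ, a, b; explicitly: φ(σ,τ,τ)=p·a, φ(τ,τ,σ)=p·a⁻¹, φ(σ,σ,τ)=a⁻¹, φ(ρ,σ,σ)=ε_σ·a, φ(σ,ρ,ρ)=p·ε_σ·a, φ(σ,σ,ρ)=ε_σ·a⁻¹, φ(ρ,ρ,σ)=p·ε_σ·a⁻¹, φ(ρ,τ,τ)=p·ε_τ·a, φ(τ,ρ,ρ)=ε_τ·a, φ(τ,τ,ρ)=p·ε_τ·a⁻¹, φ(ρ,ρ,τ)=ε_τ·a⁻¹, φ(ρ,σ,ρ)=p·ε_σ·b, φ(τ,ρ,τ)=p·ε_τ·b, φ(τ,σ,τ)=p·b⁻¹, φ(σ,ρ,σ)=ε_σ·b⁻¹, φ(ρ,τ,ρ)=ε_τ·b⁻¹.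 -/
def IsCocycle {k : Type*} [Field k] {G : Type*} [Group G] (φ : G → G → G → kˣ) : Prop :=
  ∀ x y z t : G, φ y z t * φ x (y * z) t * φ x y z = φ (x * y) z t * φ x y (z * t)

def IsNormalized {k : Type*} [Field k] {G : Type*} [Group G] (φ : G → G → G → kˣ) : Prop :=
  ∀ x z : G, φ x 1 z = 1

def d2 {k : Type*} [Field k] {G : Type*} [Group G] (g : G → G → kˣ) : G → G → G → kˣ :=
  fun x y z => g y z * (g (x * y) z)⁻¹ * g x (y * z) * (g x y)⁻¹

def IsCoboundary {k : Type*} [Field k] {G : Type*} [Group G] (φ : G → G → G → kˣ) : Prop :=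
  ∃ g : G → G → kˣ, φ = d2 g

/-- The Klein four-group `C₂ × C₂`, written multiplicatively. -/
abbrev K : Type := Multiplicative (ZMod 2 × ZMod 2)

def σ : K := Multiplicative.ofAdd (1, 0)
def τ : K := Multiplicative.ofAdd (0, 1)
def ρ : K := Multiplicative.ofAdd (1, 1)

/-- A normalized 3-cocycle on the Klein group is happy if it takes the value
`p = ε_σ · ε_τ · ε_ρ` on each permutation of `(σ, τ, ρ)`. -/
def IsHappy {k : Type*} [Field k] (φ : K → K → K → kˣ) : Prop :=
  ∀ x y z : K, List.Perm [x, y, z] [σ, τ, ρ] →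
    φ x y z = φ σ σ σ * φ τ τ τ * φ ρ ρ ρ

/-
In `C₂ × C₂` every ordering `(x, y, z)` of `σ, τ, ρ` satisfies `x * y = z`, so the happy
condition says `φ(x, y, x * y) = p`. Evaluating the cocycle identity at the quadruples
`(y, x, x, x)`, `(y, x, x, y)`, `(z, x, y, y)`, `(y, x, z, y)`, `(x, y, x, y)` and
`(x, x, y, x)`, and using `x² = 1`, `φ(x, x, x)² = 1` and `p² = 1`, gives five relations
between the values of `φ` on triples with two distinct entries. Applied to the six orderings
of `(σ, τ, ρ)` they express all these values through `ε_σ, ε_τ, p, a, b`.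
-/

namespace IsCocycle

variable {k : Type*} [Field k] {G : Type*} [Group G] {φ : G → G → G → kˣ}

theorem apply_one_left (hc : IsCocycle φ) (hn : IsNormalized φ) (y z : G) : φ 1 y z = 1 := by
  simpa [hn _ _] using hc 1 1 y z

theorem apply_one_right (hc : IsCocycle φ) (hn : IsNormalized φ) (x y : G) : φ x y 1 = 1 := by
  simpa [hn _ _] using hc x y 1 1

theorem apply_self_self_self_mul_self (hc : IsCocycle φ) (hn : IsNormalized φ) {x : G}
    (hx : x * x = 1) : φ x x x * φ x x x = 1 := by
  simpa [hx, hn _ _, hc.apply_one_left hn, hc.apply_one_right hn] using hc x x x x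

theorem apply_self_self_self_inv (hc : IsCocycle φ) (hn : IsNormalized φ) {x : G}
    (hx : x * x = 1) : (φ x x x)⁻¹ = φ x x x :=
  inv_eq_of_mul_eq_one_right (hc.apply_self_self_self_mul_self hn hx)

theorem apply_mul_self_self (hc : IsCocycle φ) (hn : IsNormalized φ) {x : G} (hx : x * x = 1)
    (y : G) : φ (y * x) x x = φ x x x * φ y x x := by
  simpa [hx, hn _ _, hc.apply_one_right hn] using (hc y x x x).symm

end IsCocycle

theorem List.Perm.swap_left {α : Type*} {x y z : α} {l : List α} (h : [x, y, z].Perm l) :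
    [y, x, z].Perm l :=
  (List.Perm.swap x y [z]).trans h

theorem List.Perm.swap_right {α : Type*} {x y z : α} {l : List α} (h : [x, y, z].Perm l) :
    [x, z, y].Perm l :=
  ((List.Perm.swap y z []).cons x).trans h

theorem K.mul_self : ∀ x : K, x * x = 1 := by decide

theorem K.mul_eq_of_perm : ∀ {x y z : K}, [x, y, z].Perm [σ, τ, ρ] → x * y = z := by decide

def diagProd {k : Type*} [Field k] (φ : K → K → K → kˣ) : kˣ := φ σ σ σ * φ τ τ τ * φ ρ ρ ρ

namespace IsCocycle

variable {k : Type*} [Field k] {φ : K → K → K → kˣ} {x y z : K}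

theorem diagProd_mul_self (hc : IsCocycle φ) (hn : IsNormalized φ) :
    diagProd φ * diagProd φ = 1 := by
  rw [diagProd, mul_mul_mul_comm (φ σ σ σ * φ τ τ τ), mul_mul_mul_comm (φ σ σ σ),
    hc.apply_self_self_self_mul_self hn (K.mul_self σ),
    hc.apply_self_self_self_mul_self hn (K.mul_self τ),
    hc.apply_self_self_self_mul_self hn (K.mul_self ρ), one_mul, one_mul]

theorem apply_self_self_of_perm (hc : IsCocycle φ) (hn : IsNormalized φ)
    (h : [x, y, z].Perm [σ, τ, ρ]) : φ z x x = φ x x x * φ y x x := by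
  rw [← K.mul_eq_of_perm h.swap_left]
  exact hc.apply_mul_self_self hn (K.mul_self x) y

end IsCocycle

namespace IsHappy

variable {k : Type*} [Field k] {φ : K → K → K → kˣ} {x y z : K}

theorem apply_of_perm (hh : IsHappy φ) (h : [x, y, z].Perm [σ, τ, ρ]) : φ x y z = diagProd φ :=
  hh x y z h

theorem apply_self_self_eq_inv (hh : IsHappy φ) (hc : IsCocycle φ) (hn : IsNormalized φ)
    (h : [x, y, z].Perm [σ, τ, ρ]) : φ x x y = (φ y x x)⁻¹ := by
  have h₀ := hc y x x y
  rw [K.mul_self, K.mul_eq_of_perm h, K.mul_eq_of_perm h.swap_left, hn, mul_one,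
    hh.apply_of_perm h.swap_right.swap_left, hh.apply_of_perm h.swap_left,
    hc.diagProd_mul_self hn] at h₀
  exact eq_inv_of_mul_eq_one_left h₀

theorem apply_self_self_eq_diagProd_mul (hh : IsHappy φ) (hc : IsCocycle φ)
    (hn : IsNormalized φ) (h : [x, y, z].Perm [σ, τ, ρ]) : φ x y y = diagProd φ * φ y x x := by
  have h₁ := hc z x y y
  rw [K.mul_eq_of_perm h, K.mul_eq_of_perm h.swap_right.swap_left, K.mul_self,
    hc.apply_one_right hn, mul_one, hh.apply_of_perm h.swap_right.swap_left] at h₁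
  have h₂ := hc y x z y
  rw [K.mul_eq_of_perm h.swap_right, K.mul_eq_of_perm h.swap_left,
    K.mul_eq_of_perm h.swap_left.swap_right.swap_left, hh.apply_of_perm h.swap_right,
    hh.apply_of_perm h.swap_left, mul_right_comm, hc.diagProd_mul_self hn, one_mul] at h₂
  apply mul_left_cancel (a := φ z z y)
  rw [mul_comm, eq_mul_inv_of_mul_eq h₁, inv_eq_of_mul_eq_one_right (hc.diagProd_mul_self hn),
    mul_left_comm, ← h₂, mul_comm]

theorem apply_swap_eq_diagProd_mul_inv (hh : IsHappy φ) (hc : IsCocycle φ)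
    (h : [x, y, z].Perm [σ, τ, ρ]) : φ y x y = diagProd φ * (φ x y x)⁻¹ := by
  have h₀ := hc x y x y
  rw [K.mul_eq_of_perm h, K.mul_eq_of_perm h.swap_left, hh.apply_of_perm h.swap_right,
    hh.apply_of_perm h.swap_right.swap_left, hh.apply_of_perm h, mul_right_comm] at h₀
  exact eq_mul_inv_of_mul_eq (mul_right_cancel h₀)

theorem apply_mul_eq_mul_inv (hh : IsHappy φ) (hc : IsCocycle φ) (hn : IsNormalized φ)
    (h : [x, y, z].Perm [σ, τ, ρ]) : φ x z x = φ x x x * (φ x y x)⁻¹ := by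
  have h₀ := hc x x y x
  rw [K.mul_self, K.mul_eq_of_perm h, K.mul_eq_of_perm h.swap_left, hc.apply_one_left hn,
    one_mul, hh.apply_self_self_eq_inv hc hn h, hh.apply_self_self_eq_inv hc hn h.swap_right,
    hc.apply_self_self_of_perm hn h, mul_inv, hc.apply_self_self_self_inv hn (K.mul_self x)] at h₀
  rw [eq_mul_inv_iff_mul_eq, mul_comm]
  exact mul_right_cancel h₀

end IsHappy

theorem statement8_general {k : Type*} [Field k]
    (φ : K → K → K → kˣ) (hc : IsCocycle φ) (hn : IsNormalized φ) (hh : IsHappy φ)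
    (a b εσ ετ ερ p : kˣ)
    (ha : a = φ τ σ σ) (hb : b = φ σ τ σ)
    (hεσ : εσ = φ σ σ σ) (hετ : ετ = φ τ τ τ) (hερ : ερ = φ ρ ρ ρ)
    (hp : p = εσ * ετ * ερ) :
    φ σ τ τ = p * a ∧
    φ τ τ σ = p * a⁻¹ ∧
    φ σ σ τ = a⁻¹ ∧
    φ ρ σ σ = εσ * a ∧
    φ σ ρ ρ = p * εσ * a ∧
    φ σ σ ρ = εσ * a⁻¹ ∧
    φ ρ ρ σ = p * εσ * a⁻¹ ∧
    φ ρ τ τ = p * ετ * a ∧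
    φ τ ρ ρ = ετ * a ∧
    φ τ τ ρ = p * ετ * a⁻¹ ∧
    φ ρ ρ τ = ετ * a⁻¹ ∧
    φ ρ σ ρ = p * εσ * b ∧
    φ τ ρ τ = p * ετ * b ∧
    φ τ σ τ = p * b⁻¹ ∧
    φ σ ρ σ = εσ * b⁻¹ ∧
    φ ρ τ ρ = ετ * b⁻¹ := by
  have hστρ : [σ, τ, ρ].Perm [σ, τ, ρ] := by decide
  have hσρτ : [σ, ρ, τ].Perm [σ, τ, ρ] := by decide
  have hτσρ : [τ, σ, ρ].Perm [σ, τ, ρ] := by decide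
  have hτρσ : [τ, ρ, σ].Perm [σ, τ, ρ] := by decide
  have hρστ : [ρ, σ, τ].Perm [σ, τ, ρ] := by decide
  have hρτσ : [ρ, τ, σ].Perm [σ, τ, ρ] := by decide
  have hP : diagProd φ = p := by rw [hp, hεσ, hετ, hερ]; rfl
  have hpp : p * p = 1 := hP ▸ hc.diagProd_mul_self hn
  have hp_inv : p⁻¹ = p := inv_eq_of_mul_eq_one_right hpp
  have hεσ_inv : εσ⁻¹ = εσ := hεσ ▸ hc.apply_self_self_self_inv hn (K.mul_self σ)
  have hετ_inv : ετ⁻¹ = ετ := hετ ▸ hc.apply_self_self_self_inv hn (K.mul_self τ)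
  have h₁ : φ σ τ τ = p * a := by rw [hh.apply_self_self_eq_diagProd_mul hc hn hστρ, hP, ha]
  have h₄ : φ ρ σ σ = εσ * a := by rw [hc.apply_self_self_of_perm hn hστρ, hεσ, ha]
  have h₅ : φ σ ρ ρ = p * εσ * a := by
    rw [hh.apply_self_self_eq_diagProd_mul hc hn hσρτ, hP, h₄, mul_assoc]
  have h₈ : φ ρ τ τ = p * ετ * a := by
    rw [hc.apply_self_self_of_perm hn hτσρ, h₁, hετ, mul_left_comm, mul_assoc]
  have h₉ : φ τ ρ ρ = ετ * a := by
    rw [hh.apply_self_self_eq_diagProd_mul hc hn hτρσ, hP, h₈, ← mul_assoc, ← mul_assoc, hpp,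
      one_mul]
  have h₁₃ : φ τ ρ τ = p * ετ * b := by
    rw [hh.apply_mul_eq_mul_inv hc hn hτσρ, hh.apply_swap_eq_diagProd_mul_inv hc hστρ, hP, hετ,
      hb, mul_inv, hp_inv, inv_inv, mul_left_comm, mul_assoc]
  refine ⟨h₁, ?_, ?_, h₄, h₅, ?_, ?_, h₈, h₉, ?_, ?_, ?_, h₁₃, ?_, ?_, ?_⟩
  · rw [hh.apply_self_self_eq_inv hc hn hτσρ, h₁, mul_inv, hp_inv]
  · rw [hh.apply_self_self_eq_inv hc hn hστρ, ha]
  · rw [hh.apply_self_self_eq_inv hc hn hσρτ, h₄, mul_inv, hεσ_inv]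
  · rw [hh.apply_self_self_eq_inv hc hn hρστ, h₅, mul_inv, mul_inv, hp_inv, hεσ_inv]
  · rw [hh.apply_self_self_eq_inv hc hn hτρσ, h₈, mul_inv, mul_inv, hp_inv, hετ_inv]
  · rw [hh.apply_self_self_eq_inv hc hn hρτσ, h₉, mul_inv, hετ_inv]
  · rw [hh.apply_swap_eq_diagProd_mul_inv hc hσρτ, hh.apply_mul_eq_mul_inv hc hn hστρ, hP, ← hεσ,
      ← hb, mul_inv, hεσ_inv, inv_inv, mul_assoc]
  · rw [hh.apply_swap_eq_diagProd_mul_inv hc hστρ, hP, hb]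
  · rw [hh.apply_mul_eq_mul_inv hc hn hστρ, hεσ, hb]
  · rw [hh.apply_swap_eq_diagProd_mul_inv hc hτρσ, h₁₃, hP, mul_inv, mul_inv, hp_inv, hετ_inv,
      ← mul_assoc, ← mul_assoc, hpp, one_mul]

theorem statement8 {k : Type*} [Field k] (hk : ringChar k ≠ 2)
    (φ : K → K → K → kˣ) (hc : IsCocycle φ) (hn : IsNormalized φ) (hh : IsHappy φ)
    (a b εσ ετ ερ p : kˣ)
    (ha : a = φ τ σ σ) (hb : b = φ σ τ σ)
    (hεσ : εσ = φ σ σ σ) (hετ : ετ = φ τ τ τ) (hερ : ερ = φ ρ ρ ρ)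
    (hp : p = εσ * ετ * ερ) :
    φ σ τ τ = p * a ∧
    φ τ τ σ = p * a⁻¹ ∧
    φ σ σ τ = a⁻¹ ∧
    φ ρ σ σ = εσ * a ∧
    φ σ ρ ρ = p * εσ * a ∧
    φ σ σ ρ = εσ * a⁻¹ ∧
    φ ρ ρ σ = p * εσ * a⁻¹ ∧
    φ ρ τ τ = p * ετ * a ∧
    φ τ ρ ρ = ετ * a ∧
    φ τ τ ρ = p * ετ * a⁻¹ ∧
    φ ρ ρ τ = ετ * a⁻¹ ∧
    φ ρ σ ρ = p * εσ * b ∧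
    φ τ ρ τ = p * ετ * b ∧
    φ τ σ τ = p * b⁻¹ ∧
    φ σ ρ σ = εσ * b⁻¹ ∧
    φ ρ τ ρ = ετ * b⁻¹ :=
  statement8_general φ hc hn hh a b εσ ετ ερ p ha hb hεσ hετ hερ hp
end

section
/- Let k be a field of characteristic different from 2 and b ∈ k*. There exists a function R: (C₂×C₂)×(C₂×C₂) → k* such that (g_b, R) is an abelian 3-cocycle on C₂×C₂ with coefficients in k* if and only if g_b is a 3-coboundary (equivalently, if and only if b has a square root in k*). -/
/-- The happy normalized 3-cocycle `h_a` on the Klein group. -/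
def hA {k : Type*} [Field k] (a : kˣ) : K → K → K → kˣ := fun x y z =>
  if x ≠ 1 ∧ y = z ∧ y ≠ 1 ∧ x ≠ y then a
  else if x = y ∧ x ≠ 1 ∧ z ≠ 1 ∧ y ≠ z then a⁻¹
  else 1

/-- The happy normalized 3-cocycle `g_b` on the Klein group. -/
def gB {k : Type*} [Field k] (b : kˣ) : K → K → K → kˣ := fun x y z =>
  if (x, y, z) = (σ, τ, σ) ∨ (x, y, z) = (ρ, σ, ρ) ∨ (x, y, z) = (τ, ρ, τ) then b
  else if (x, y, z) = (τ, σ, τ) ∨ (x, y, z) = (σ, ρ, σ) ∨ (x, y, z) = (ρ, τ, ρ) then b⁻¹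
  else 1

/-- An abelian 3-cocycle on an abelian group `G` with coefficients in `kˣ` :
a normalized 3-cocycle `φ` together with an R-matrix `R`. -/
def IsAbelianCocycle {k : Type*} [Field k] {G : Type*} [CommGroup G]
    (φ : G → G → G → kˣ) (R : G → G → kˣ) : Prop :=
  IsCocycle φ ∧ IsNormalized φ ∧
  (∀ x y z : G, R (x * y) z * φ x z y = φ x y z * R x z * φ z x y * R y z) ∧
  (∀ x y z : G, φ x y z * R x (y * z) * φ y z x = R x y * φ y x z * R x z)

/-!
If `b = d ^ 2`, then `gB b` is the coboundary of an explicit 2-cochain with values in powers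
of `d`, and the coboundary `d2 g` of any 2-cochain on an abelian group is part of an abelian
3-cocycle with `R x y = g y x / g x y`. Conversely, in any abelian 3-cocycle `(φ, R)` the first
hexagon at `(x, x, z)` with `x * x = 1` reads `φ x z x = φ x x z * R x z ^ 2 * φ z x x`; at
`x = σ`, `z = τ` this says `b = R σ τ ^ 2`.
-/

section

variable {k : Type*} [Field k]

theorem isCocycle_d2 {G : Type*} [Group G] (g : G → G → kˣ) : IsCocycle (d2 g) := by
  intro x y z t
  simp only [d2, mul_assoc]
  rw [Units.ext_iff]
  push_cast
  field_simp

theorem isAbelianCocycle_d2 {G : Type*} [CommGroup G] (g : G → G → kˣ)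
    (hg : IsNormalized (d2 g)) : IsAbelianCocycle (d2 g) (fun x y => g y x / g x y) := by
  refine ⟨isCocycle_d2 g, hg, fun x y z => ?_, fun x y z => ?_⟩
  · simp only [d2]
    rw [Units.ext_iff]
    push_cast
    rw [mul_comm z x, mul_comm z y]
    field_simp
  · simp only [d2]
    rw [Units.ext_iff]
    push_cast
    rw [mul_comm y x, mul_comm x z]
    field_simp

theorem IsCocycle.apply_one_left_s15 {G : Type*} [Group G] {φ : G → G → G → kˣ}
    (hφ : IsCocycle φ) (hn : IsNormalized φ) (y z : G) : φ 1 y z = 1 := by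
  have h := hφ 1 1 y z
  rw [one_mul, one_mul, hn 1 y, hn 1 (y * z), mul_one, mul_one] at h
  exact mul_eq_left.mp h

theorem IsAbelianCocycle.R_one_left {G : Type*} [CommGroup G] {φ : G → G → G → kˣ}
    {R : G → G → kˣ} (h : IsAbelianCocycle φ R) (z : G) : R 1 z = 1 := by
  obtain ⟨hφ, hn, hex, -⟩ := h
  have hz := hex 1 1 z
  rw [one_mul, hφ.apply_one_left_s15 hn, hn, hn] at hz
  simpa using hz

theorem IsAbelianCocycle.apply_of_mul_self_eq_one {G : Type*} [CommGroup G]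
    {φ : G → G → G → kˣ} {R : G → G → kˣ} (h : IsAbelianCocycle φ R) {x : G}
    (hx : x * x = 1) (z : G) : φ x z x = φ x x z * R x z ^ 2 * φ z x x := by
  have hxz := h.2.2.1 x x z
  rw [hx, h.R_one_left, one_mul] at hxz
  rw [hxz, sq]
  ac_rfl

def gBExp : K → K → K → ℤ := fun x y z =>
  if (x, y, z) = (σ, τ, σ) ∨ (x, y, z) = (ρ, σ, ρ) ∨ (x, y, z) = (τ, ρ, τ) then 1
  else if (x, y, z) = (τ, σ, τ) ∨ (x, y, z) = (σ, ρ, σ) ∨ (x, y, z) = (ρ, τ, ρ) then -1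
  else 0

theorem gB_eq_zpow (b : kˣ) (x y z : K) : gB b x y z = b ^ gBExp x y z := by
  unfold gB gBExp
  split_ifs <;> simp

/-- `d ^ gBPrimitiveExp x y` is a 2-cochain whose coboundary is `gB (d ^ 2)`. -/
def gBPrimitiveExp : K → K → ℤ := fun x y =>
  if (x, y) = (σ, σ) ∨ (x, y) = (σ, ρ) ∨ (x, y) = (τ, σ) then 1
  else if (x, y) = (τ, ρ) then -1
  else 0

theorem two_mul_gBExp : ∀ x y z : K, 2 * gBExp x y z = gBPrimitiveExp y z -
    gBPrimitiveExp (x * y) z + gBPrimitiveExp x (y * z) - gBPrimitiveExp x y := by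
  decide

theorem gB_sq_eq_d2 (d : kˣ) :
    gB (d ^ 2) = d2 (fun x y => d ^ gBPrimitiveExp x y) := by
  funext x y z
  rw [gB_eq_zpow, ← zpow_natCast, ← zpow_mul, Nat.cast_ofNat, two_mul_gBExp]
  simp only [d2, zpow_sub, zpow_add]

theorem isNormalized_gB (b : kˣ) : IsNormalized (gB b) := by
  intro x z
  rw [gB_eq_zpow, show gBExp x 1 z = 0 by revert x z; decide, zpow_zero]

theorem sq_eq_of_isAbelianCocycle_gB {b : kˣ} {R : K → K → kˣ}
    (h : IsAbelianCocycle (gB b) R) : R σ τ ^ 2 = b := by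
  have hστσ := h.apply_of_mul_self_eq_one (x := σ) (by decide) τ
  simpa only [gB_eq_zpow, show gBExp σ τ σ = 1 by decide, show gBExp σ σ τ = 0 by decide,
    show gBExp τ σ σ = 0 by decide, zpow_one, zpow_zero, one_mul, mul_one] using hστσ.symm

end

theorem statement15_general {k : Type*} [Field k] (b : kˣ) :
    ((∃ R : K → K → kˣ, IsAbelianCocycle (gB b) R) ↔ IsCoboundary (gB b)) ∧
    (IsCoboundary (gB b) ↔ ∃ d : kˣ, d ^ 2 = b) := by
  have isCoboundary_of_sq : (∃ d : kˣ, d ^ 2 = b) → IsCoboundary (gB b) := by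
    rintro ⟨d, rfl⟩
    exact ⟨_, gB_sq_eq_d2 d⟩
  have abelian_of_isCoboundary : IsCoboundary (gB b) → ∃ R, IsAbelianCocycle (gB b) R := by
    rintro ⟨g, hg⟩
    rw [hg]
    exact ⟨_, isAbelianCocycle_d2 g (hg ▸ isNormalized_gB b)⟩
  have sq_of_abelian : (∃ R, IsAbelianCocycle (gB b) R) → ∃ d : kˣ, d ^ 2 = b :=
    fun ⟨R, hR⟩ => ⟨R σ τ, sq_eq_of_isAbelianCocycle_gB hR⟩
  exact ⟨⟨isCoboundary_of_sq ∘ sq_of_abelian, abelian_of_isCoboundary⟩,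
    ⟨sq_of_abelian ∘ abelian_of_isCoboundary, isCoboundary_of_sq⟩⟩

theorem statement15 {k : Type*} [Field k] (hk : ringChar k ≠ 2) (b : kˣ) :
    ((∃ R : K → K → kˣ, IsAbelianCocycle (gB b) R) ↔ IsCoboundary (gB b)) ∧
    (IsCoboundary (gB b) ↔ ∃ d : kˣ, d ^ 2 = b) :=
  statement15_general b
end
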